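/- The elements 3e₁ + 3e₂ + 2e₃ + 3e₄ and 3e₁ + e₂ + 2e₄ of M = (ℤ/4ℤ)⁵ ⊕ (ℤ/2ℤ) violate the congruence a₂ + a₃ + a₆ ≡ 0 (mod 2); hence neither lies in (s₃ − 1)M nor in (s₃s₅ − 1)M, and the affine maps x ↦ s₃x + (3e₁+3e₂+2e₃+3e₄) and x ↦ s₃s₅x + (3e₁+e₂+2e₄) have no fixed points in M. -/

import Mathlib

/-- `M = (ℤ/4ℤ)⁵ ⊕ (ℤ/2ℤ)`, the Mordell–Weil group `Jac(C₄)(ℚ(ζ₈))` in the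
basis `e₁,…,e₆` (with `e₆` of order 2). -/
abbrev M : Type := (Fin 5 → ZMod 4) × ZMod 2

/-- Reduction `ℤ/4ℤ → ℤ/2ℤ`. -/
def r : ZMod 4 → ZMod 2 := ZMod.castHom (show (2:ℕ) ∣ 4 by norm_num) (ZMod 2)

/-- The lift `ℤ/2ℤ → ℤ/4ℤ`, `a ↦ 2a` (used for matrix entries `2` in the
`e₆`-column). -/
def l : ZMod 2 → ZMod 4 := fun a => 2 * (a.val : ZMod 4)

/-- The matrix `s₃ = [[2,1,0,0,3,0],[1,2,0,0,3,0],[1,1,3,2,0,2],[1,3,0,3,0,0],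
[0,0,0,0,1,0],[0,0,0,0,1,1]]` acting on `M`. -/
def s3 : M → M := fun x =>
  (![2 * x.1 0 + x.1 1 + 3 * x.1 4,
     x.1 0 + 2 * x.1 1 + 3 * x.1 4,
     x.1 0 + x.1 1 + 3 * x.1 2 + 2 * x.1 3 + l x.2,
     x.1 0 + 3 * x.1 1 + 3 * x.1 3,
     x.1 4],
   r (x.1 4) + x.2)

/-- The matrix `s₅ = [[1,2,0,0,2,0],[2,1,0,0,2,0],[2,2,3,0,0,0],[2,0,2,3,0,2],
[0,0,0,0,3,0],[0,0,0,0,0,1]]` acting on `M`. -/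
def s5 : M → M := fun x =>
  (![x.1 0 + 2 * x.1 1 + 2 * x.1 4,
     2 * x.1 0 + x.1 1 + 2 * x.1 4,
     2 * x.1 0 + 2 * x.1 1 + 3 * x.1 2,
     2 * x.1 0 + 2 * x.1 2 + 3 * x.1 3 + l x.2,
     3 * x.1 4],
   x.2)

/-- `3e₁ + 3e₂ + 2e₃ + 3e₄ = (σ₃−1)[A₀]`. -/
def w1 : M := (![3, 3, 2, 3, 0], 0)

/-- `3e₁ + e₂ + 2e₄ = (σ₃σ₅−1)[A₀]`. -/
def w2 : M := (![3, 1, 0, 2, 0], 0)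

/-! The functional `x ↦ a₂ + a₃ + a₆ mod 2` is additive and invariant under `s₃` and `s₅`,
so it vanishes on `(g - 1)M` for every `g` in the group they generate; a fixed point of
`x ↦ g x + w` would put `-w` there. But the functional is `1` on `w₁` and on `w₂`. -/

section Invariant

variable {A B : Type*} [AddGroup A] [AddGroup B] (φ : A →+ B) {f : A → A}

theorem not_exists_sub_eq_of_map_invariant (hf : ∀ x, φ (f x) = φ x) {w : A} (hw : φ w ≠ 0) :
    ¬ ∃ x, f x - x = w := by
  rintro ⟨x, rfl⟩
  exact hw (by rw [map_sub, hf, sub_self])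

theorem add_ne_self_of_map_invariant (hf : ∀ x, φ (f x) = φ x) {w : A} (hw : φ w ≠ 0) (x : A) :
    f x + w ≠ x := by
  intro hx
  apply hw
  have h := congrArg φ hx
  rwa [map_add, hf, add_eq_left] at h

end Invariant

theorem r_add (a b : ZMod 4) : r (a + b) = r a + r b := map_add _ a b

theorem r_mul (a b : ZMod 4) : r (a * b) = r a * r b := map_mul _ a b

theorem r_two : r 2 = 0 := by decide

theorem r_three : r 3 = 1 := by decide

theorem r_l (a : ZMod 2) : r (l a) = 0 := by revert a; decide

def parity : M →+ ZMod 2 :=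
  AddMonoidHom.mk' (fun x => r (x.1 1) + r (x.1 2) + x.2) fun x y => by
    simp only [Prod.fst_add, Prod.snd_add, Pi.add_apply, r_add]; ring

theorem parity_s3 (x : M) : parity (s3 x) = parity x := by
  simp only [parity, s3, AddMonoidHom.mk'_apply, Matrix.cons_val_one, Matrix.cons_val_zero,
    Matrix.cons_val, r_add, r_mul, r_two, r_three, r_l, zero_mul, one_mul, add_zero]
  ring_nf
  reduce_mod_char

theorem parity_s5 (x : M) : parity (s5 x) = parity x := by
  simp only [parity, s5, AddMonoidHom.mk'_apply, Matrix.cons_val_one, Matrix.cons_val_zero,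
    Matrix.cons_val, r_add, r_mul, r_two, r_three, zero_mul, one_mul, zero_add, add_zero]

/-- The elements `3e₁+3e₂+2e₃+3e₄` and `3e₁+e₂+2e₄` violate the congruence
`a₂ + a₃ + a₆ ≡ 0 (mod 2)`; hence neither lies in `(s₃−1)M` nor in
`(s₃s₅−1)M`, and the affine maps `x ↦ s₃x + w₁` and `x ↦ s₃s₅x + w₂` have no
fixed points in `M`. -/
theorem stmt13 :
    (r (w1.1 1) + r (w1.1 2) + w1.2 ≠ 0) ∧
    (r (w2.1 1) + r (w2.1 2) + w2.2 ≠ 0) ∧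
    (¬ ∃ x : M, s3 x - x = w1) ∧ (¬ ∃ x : M, s3 (s5 x) - x = w1) ∧
    (¬ ∃ x : M, s3 x - x = w2) ∧ (¬ ∃ x : M, s3 (s5 x) - x = w2) ∧
    (∀ x : M, s3 x + w1 ≠ x) ∧ (∀ x : M, s3 (s5 x) + w2 ≠ x) := by
  have hw1 : parity w1 ≠ 0 := by decide
  have hw2 : parity w2 ≠ 0 := by decide
  have hs35 (x : M) : parity (s3 (s5 x)) = parity x := (parity_s3 _).trans (parity_s5 x)
  exact ⟨hw1, hw2,
    not_exists_sub_eq_of_map_invariant parity parity_s3 hw1,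
    not_exists_sub_eq_of_map_invariant parity hs35 hw1,
    not_exists_sub_eq_of_map_invariant parity parity_s3 hw2,
    not_exists_sub_eq_of_map_invariant parity hs35 hw2,
    add_ne_self_of_map_invariant parity parity_s3 hw1,
    add_ne_self_of_map_invariant parity hs35 hw2⟩
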